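/- arXiv:1806.08356 — 2 statements merged into one kernel-verified Lean document; each statement's English description precedes it below -/
import Mathlib

section
/- (Proposition 3(a)) Let u, v be two distinct points of H and let λ = ⟨q(u), p⟩ / ⟨q(v), p⟩. Then λ > 0, and the cycle r = q(u) − λ·q(v) satisfies ⟨r, p⟩ = 0 and ⟨r, r⟩ = −2λ·⟨q(u), q(v)⟩ > 0; moreover the reflection along r maps q(u) to λ·q(v), i.e., q(u) − 2(⟨q(u), r⟩/⟨r, r⟩)·r = λ·q(v), and every cycle ℓ with ⟨ℓ, q(u)⟩ = 0 and ⟨ℓ, q(v)⟩ = 0 satisfies ⟨ℓ, r⟩ = 0. -/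
variable {K : Type*} [Field K] [LinearOrder K] [IsStrictOrderedRing K]
variable {E : Type*} [AddCommGroup E] [Module K E]

/-- The cycle pairing on the space of cycles `F = K × E × K`:
`⟨(a,b,c),(a',b',c')⟩ = B(b,b') − 2ac' − 2a'c`. -/
def cyc (B : LinearMap.BilinForm K E) (f g : K × E × K) : K :=
  B f.2.1 g.2.1 - 2 * f.1 * g.2.2 - 2 * g.1 * f.2.2

/-- The normalized zero circle centered at `u`: the cycle `(1, −2u, B(u,u))`. -/
def qc (B : LinearMap.BilinForm K E) (u : E) : K × E × K :=
  (1, (-2 : K) • u, B u u)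

/-! The cycles `q(u)` are isotropic, `⟨q(u), q(v)⟩ = −2 B(u − v, u − v) < 0` and
`⟨q(u), p⟩ = −2 B(i, u) > 0` on `H`; `λ` is exactly the factor making `r = q(u) − λ q(v)`
orthogonal to `p`. For isotropic `x`, `y` the cycle `r = x − λ y` has
`⟨r, r⟩ = −2λ⟨x, y⟩ = 2⟨x, r⟩`, so the reflection along `r` sends `x` to `x − r = λ y`. -/

section CyclePairing

variable {𝕜 : Type*} [Field 𝕜] {V : Type*} [AddCommGroup V] [Module 𝕜 V]
  {B : LinearMap.BilinForm 𝕜 V}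

lemma cyc_comm (hB : ∀ x y : V, B x y = B y x) (f g : 𝕜 × V × 𝕜) :
    cyc B f g = cyc B g f := by
  simp only [cyc, hB f.2.1]
  ring

lemma cyc_sub_smul_left (f g h : 𝕜 × V × 𝕜) (c : 𝕜) :
    cyc B (g - c • h) f = cyc B g f - c * cyc B h f := by
  simp only [cyc, Prod.fst_sub, Prod.snd_sub, Prod.smul_fst, Prod.smul_snd, map_sub, map_smul,
    LinearMap.sub_apply, LinearMap.smul_apply, smul_eq_mul]
  ring

lemma cyc_sub_smul_right (f g h : 𝕜 × V × 𝕜) (c : 𝕜) :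
    cyc B f (g - c • h) = cyc B f g - c * cyc B f h := by
  simp only [cyc, Prod.fst_sub, Prod.snd_sub, Prod.smul_fst, Prod.smul_snd, map_sub, map_smul,
    smul_eq_mul]
  ring

lemma cyc_qc_self (u : V) : cyc B (qc B u) (qc B u) = 0 := by
  simp only [cyc, qc, map_smul, LinearMap.smul_apply, smul_eq_mul]
  ring

lemma cyc_qc_qc (hB : ∀ x y : V, B x y = B y x) (u v : V) :
    cyc B (qc B u) (qc B v) = -2 * B (u - v) (u - v) := by
  simp only [cyc, qc, map_smul, map_sub, LinearMap.smul_apply, LinearMap.sub_apply, smul_eq_mul,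
    hB v u]
  ring

lemma cyc_qc_line (hB : ∀ x y : V, B x y = B y x) (u i : V) :
    cyc B (qc B u) ((0 : 𝕜), i, (0 : 𝕜)) = -2 * B i u := by
  simp only [cyc, qc, map_smul, LinearMap.smul_apply, smul_eq_mul, hB u i]
  ring

variable {x y : 𝕜 × V × 𝕜}

lemma cyc_sub_smul_self_of_isotropic (hB : ∀ x y : V, B x y = B y x) (hx : cyc B x x = 0)
    (hy : cyc B y y = 0) (c : 𝕜) :
    cyc B (x - c • y) (x - c • y) = -2 * c * cyc B x y := by
  rw [cyc_sub_smul_left, cyc_sub_smul_right, cyc_sub_smul_right, hx, hy, cyc_comm hB y x]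
  ring

lemma reflection_sub_smul_of_isotropic [NeZero (2 : 𝕜)] (hB : ∀ x y : V, B x y = B y x)
    (hx : cyc B x x = 0) (hy : cyc B y y = 0) {c : 𝕜} (hc : c ≠ 0) (hxy : cyc B x y ≠ 0) :
    x - (2 * (cyc B x (x - c • y) / cyc B (x - c • y) (x - c • y))) • (x - c • y) = c • y := by
  have hcoef : 2 * (cyc B x (x - c • y) / cyc B (x - c • y) (x - c • y)) = 1 := by
    rw [cyc_sub_smul_self_of_isotropic hB hx hy, cyc_sub_smul_right, hx]
    field_simp
    ring
  rw [hcoef, one_smul, sub_sub_cancel]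

end CyclePairing

lemma cyc_qc_line_pos {B : LinearMap.BilinForm K E} (hB : ∀ x y : E, B x y = B y x) {u i : E}
    (hu : B i u < 0) : 0 < cyc B (qc B u) ((0 : K), i, (0 : K)) := by
  rw [cyc_qc_line hB]
  linarith

lemma cyc_qc_qc_neg {B : LinearMap.BilinForm K E} (hB : ∀ x y : E, B x y = B y x)
    (hpos : ∀ x : E, x ≠ 0 → 0 < B x x) {u v : E} (huv : u ≠ v) :
    cyc B (qc B u) (qc B v) < 0 := by
  rw [cyc_qc_qc hB]
  linarith [hpos (u - v) (sub_ne_zero_of_ne huv)]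

theorem prop3a_reflection_swapping_points_general
    (B : LinearMap.BilinForm K E)
    (hsymm : ∀ x y : E, B x y = B y x)
    (hpos : ∀ x : E, x ≠ 0 → 0 < B x x)
    (i : E)
    (u v : E) (hu : B i u < 0) (hv : B i v < 0) (huv : u ≠ v) :
    0 < cyc B (qc B u) ((0 : K), i, (0 : K)) / cyc B (qc B v) ((0 : K), i, (0 : K)) ∧
    (let lam : K := cyc B (qc B u) ((0 : K), i, (0 : K)) / cyc B (qc B v) ((0 : K), i, (0 : K));
     let r : K × E × K := qc B u - lam • qc B v;
     cyc B r ((0 : K), i, (0 : K)) = 0 ∧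
     cyc B r r = -2 * lam * cyc B (qc B u) (qc B v) ∧
     0 < cyc B r r ∧
     qc B u - (2 * (cyc B (qc B u) r / cyc B r r)) • r = lam • qc B v ∧
     ∀ l : K × E × K, cyc B l (qc B u) = 0 → cyc B l (qc B v) = 0 → cyc B l r = 0) := by
  have hvp := cyc_qc_line_pos hsymm hv
  have hlam := div_pos (cyc_qc_line_pos hsymm hu) hvp
  have hqq := cyc_qc_qc_neg hsymm hpos huv
  have hrr := cyc_sub_smul_self_of_isotropic hsymm (cyc_qc_self u) (cyc_qc_self v)
    (cyc B (qc B u) ((0 : K), i, (0 : K)) / cyc B (qc B v) ((0 : K), i, (0 : K)))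
  refine ⟨hlam, ?_, hrr, ?_, ?_, fun l hlu hlv => ?_⟩
  · rw [cyc_sub_smul_left, div_mul_cancel₀ _ hvp.ne', sub_self]
  · rw [hrr]
    nlinarith
  · exact reflection_sub_smul_of_isotropic hsymm (cyc_qc_self u) (cyc_qc_self v) hlam.ne' hqq.ne
  · rw [cyc_sub_smul_right, hlu, hlv, mul_zero, sub_zero]

/-- Proposition 3(a): the reflection along `r = q(u) − λ·q(v)`, where
`λ = ⟨q(u),p⟩/⟨q(v),p⟩`, maps `q(u)` to `λ·q(v)` and stabilizes the line through
`u` and `v`. -/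
theorem prop3a_reflection_swapping_points
    (B : LinearMap.BilinForm K E)
    (heuc : ∀ x : K, 0 ≤ x → ∃ y : K, y * y = x)
    (hdim : Module.finrank K E = 2)
    (hsymm : ∀ x y : E, B x y = B y x)
    (hpos : ∀ x : E, x ≠ 0 → 0 < B x x)
    (i : E) (hi : B i i = 1)
    (u v : E) (hu : B i u < 0) (hv : B i v < 0) (huv : u ≠ v) :
    0 < cyc B (qc B u) ((0 : K), i, (0 : K)) / cyc B (qc B v) ((0 : K), i, (0 : K)) ∧
    (let lam : K := cyc B (qc B u) ((0 : K), i, (0 : K)) / cyc B (qc B v) ((0 : K), i, (0 : K));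
     let r : K × E × K := qc B u - lam • qc B v;
     cyc B r ((0 : K), i, (0 : K)) = 0 ∧
     cyc B r r = -2 * lam * cyc B (qc B u) (qc B v) ∧
     0 < cyc B r r ∧
     qc B u - (2 * (cyc B (qc B u) r / cyc B r r)) • r = lam • qc B v ∧
     ∀ l : K × E × K, cyc B l (qc B u) = 0 → cyc B l (qc B v) = 0 → cyc B l r = 0) :=
  prop3a_reflection_swapping_points_general B hsymm hpos i u v hu hv huv
end

section
/- (Proposition 3(b)) Let ℓ, m ∈ F be cycles with ⟨ℓ, p⟩ = 0, ⟨m, p⟩ = 0, ⟨ℓ, ℓ⟩ = ⟨m, m⟩ > 0, and ℓ ≠ m, ℓ ≠ −m. Then there exists ε ∈ {1, −1} such that the cycle n = ℓ − ε·m satisfies ⟨n, n⟩ > 0 and ⟨n, p⟩ = 0, and the reflection along n maps ℓ to ε·m, i.e., ℓ − 2(⟨ℓ, n⟩/⟨n, n⟩)·n = ε·m. -/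
variable {K : Type*} [Field K] [LinearOrder K] [IsStrictOrderedRing K]
variable {E : Type*} [AddCommGroup E] [Module K E]

/-! The reflection along `n = l - e • m` swaps `l` and `e • m` as soon as `l` and `m` have the
same norm and `e² = 1`: then `⟨n, n⟩ = 2⟨l, n⟩`, so `R_n l = l - n = e • m`. Choosing the sign
with `e ⟨l, m⟩ ≤ 0` makes `⟨n, n⟩ = 2(⟨l, l⟩ - e⟨l, m⟩)` positive, and `n ⊥ p` by linearity. -/

namespace LinearMap.BilinForm

variable {R V : Type*} [CommRing R] [AddCommGroup V] [Module R V] {Q : LinearMap.BilinForm R V}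

theorem apply_sub_smul_right (l m : V) (e : R) :
    Q l (l - e • m) = Q l l - e * Q l m := by
  simp only [map_sub, map_smul, smul_eq_mul]

theorem apply_sub_smul_self (hQ : Q.IsSymm) {l m : V} (hlm : Q l l = Q m m) {e : R}
    (he : e * e = 1) :
    Q (l - e • m) (l - e • m) = 2 * (Q l l - e * Q l m) := by
  have hml : Q m l = Q l m := hQ.eq m l
  simp only [map_sub, map_smul, LinearMap.sub_apply, LinearMap.smul_apply, smul_eq_mul, hml,
    ← hlm]
  linear_combination (Q l l) * he

end LinearMap.BilinForm

theorem exists_sign_mul_nonpos {R : Type*} [Ring R] [LinearOrder R] [IsOrderedRing R] (x : R) :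
    ∃ e : R, (e = 1 ∨ e = -1) ∧ e * x ≤ 0 := by
  rcases le_or_gt x 0 with hx | hx
  · exact ⟨1, Or.inl rfl, by simpa using hx⟩
  · exact ⟨-1, Or.inr rfl, by simpa using hx.le⟩

theorem sub_two_mul_div_smul_of_two_mul_eq {𝕜 V : Type*} [Field 𝕜] [AddCommGroup V]
    [Module 𝕜 V] (l n : V) {c d : 𝕜} (hd : d ≠ 0) (hcd : 2 * c = d) :
    l - (2 * (c / d)) • n = l - n := by
  rw [← mul_div_assoc, hcd, div_self hd, one_smul]

section CycForm

variable {𝕜 W : Type*} [Field 𝕜] [AddCommGroup W] [Module 𝕜 W]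

def cycForm (B : LinearMap.BilinForm 𝕜 W) : LinearMap.BilinForm 𝕜 (𝕜 × W × 𝕜) :=
  LinearMap.mk₂ 𝕜 (cyc B)
    (fun f f' g => by
      simp only [cyc, Prod.fst_add, Prod.snd_add, map_add, LinearMap.add_apply]
      ring)
    (fun c f g => by
      simp only [cyc, Prod.smul_fst, Prod.smul_snd, map_smul, LinearMap.smul_apply, smul_eq_mul]
      ring)
    (fun f g g' => by simp only [cyc, Prod.fst_add, Prod.snd_add, map_add]; ring)
    (fun c f g => by simp only [cyc, Prod.smul_fst, Prod.smul_snd, map_smul, smul_eq_mul]; ring)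

@[simp]
theorem cycForm_apply (B : LinearMap.BilinForm 𝕜 W) (f g : 𝕜 × W × 𝕜) :
    cycForm B f g = cyc B f g :=
  rfl

theorem cycForm_isSymm {B : LinearMap.BilinForm 𝕜 W} (hsymm : ∀ x y : W, B x y = B y x) :
    (cycForm B).IsSymm :=
  ⟨fun f g => by simp only [cycForm_apply, cyc, hsymm f.2.1 g.2.1]; ring⟩

end CycForm

theorem prop3b_reflection_between_lines_general
    (B : LinearMap.BilinForm K E)
    (hsymm : ∀ x y : E, B x y = B y x)
    (i : E)
    (l m : K × E × K)
    (hlp : cyc B l ((0 : K), i, (0 : K)) = 0)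
    (hmp : cyc B m ((0 : K), i, (0 : K)) = 0)
    (hnorm : cyc B l l = cyc B m m) (hlpos : 0 < cyc B l l) :
    ∃ e : K, (e = 1 ∨ e = -1) ∧
      0 < cyc B (l - e • m) (l - e • m) ∧
      cyc B (l - e • m) ((0 : K), i, (0 : K)) = 0 ∧
      l - (2 * (cyc B l (l - e • m) / cyc B (l - e • m) (l - e • m))) • (l - e • m)
        = e • m := by
  obtain ⟨e, he, hle⟩ := exists_sign_mul_nonpos (cyc B l m)
  have hee : e * e = 1 := by rcases he with rfl | rfl <;> norm_num
  simp only [← cycForm_apply] at hlp hmp hnorm hlpos hle ⊢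
  have hnn := LinearMap.BilinForm.apply_sub_smul_self (cycForm_isSymm hsymm) hnorm hee
  have hln := LinearMap.BilinForm.apply_sub_smul_right (Q := cycForm B) l m e
  have hpos : 0 < cycForm B (l - e • m) (l - e • m) := by rw [hnn]; linarith
  refine ⟨e, he, hpos, ?_, ?_⟩
  · simp [hlp, hmp]
  · rw [sub_two_mul_div_smul_of_two_mul_eq l _ hpos.ne' (by rw [hnn, hln]), sub_sub_cancel]

/-- Proposition 3(b): given two cycles `ℓ, m` orthogonal to `p` of the same positive
norm, for a suitable sign `ε` the cycle `n = ℓ − ε·m` has positive norm, is orthogonal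
to `p`, and the reflection along `n` maps `ℓ` to `ε·m`. -/
theorem prop3b_reflection_between_lines
    (B : LinearMap.BilinForm K E)
    (heuc : ∀ x : K, 0 ≤ x → ∃ y : K, y * y = x)
    (hdim : Module.finrank K E = 2)
    (hsymm : ∀ x y : E, B x y = B y x)
    (hpos : ∀ x : E, x ≠ 0 → 0 < B x x)
    (i : E) (hi : B i i = 1)
    (l m : K × E × K)
    (hlp : cyc B l ((0 : K), i, (0 : K)) = 0)
    (hmp : cyc B m ((0 : K), i, (0 : K)) = 0)
    (hnorm : cyc B l l = cyc B m m) (hlpos : 0 < cyc B l l)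
    (hne : l ≠ m) (hne' : l ≠ -m) :
    ∃ e : K, (e = 1 ∨ e = -1) ∧
      0 < cyc B (l - e • m) (l - e • m) ∧
      cyc B (l - e • m) ((0 : K), i, (0 : K)) = 0 ∧
      l - (2 * (cyc B l (l - e • m) / cyc B (l - e • m) (l - e • m))) • (l - e • m)
        = e • m :=
  prop3b_reflection_between_lines_general B hsymm i l m hlp hmp hnorm hlpos
end
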